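/- arXiv:1901.06108 — 6 statements merged into one kernel-verified Lean document; each statement's English description precedes it below -/
import Mathlib

section
/- (Correctness of the MSO encoding.) Let φ be an LTLf formula and ρ a finite trace. Then ρ ⊨ φ if and only if there exists a function Q assigning to every subformula θ of φ a set Q_θ of natural numbers such that: (i) for every atom p that is a subformula of φ, Q_p = {x : 0 ≤ x < |ρ| and p ∈ ρ[x]}; (ii) 0 ∈ Q_φ; and (iii) the assignment Q satisfies the fussy MSO constraints for φ on ρ. -/
/-- Syntax of LTLf formulas over a set `P` of atomic propositions. -/
inductive LTLf (P : Type) : Type where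
  | tt : LTLf P
  | ff : LTLf P
  | atom : P → LTLf P
  | not : LTLf P → LTLf P
  | and : LTLf P → LTLf P → LTLf P
  | or : LTLf P → LTLf P → LTLf P
  | next : LTLf P → LTLf P
  | wnext : LTLf P → LTLf P
  | until_ : LTLf P → LTLf P → LTLf P
  | release : LTLf P → LTLf P → LTLf P

/-- Satisfaction `ρ, x ⊨ φ` of an LTLf formula on a finite trace
`ρ : List (Set P)` at position `x`. -/
def LTLf.Sat {P : Type} (ρ : List (Set P)) : LTLf P → ℕ → Prop
  | .tt, _ => True
  | .ff, _ => False
  | .atom p, x => p ∈ ρ.getD x ∅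
  | .not φ, x => ¬ LTLf.Sat ρ φ x
  | .and φ₁ φ₂, x => LTLf.Sat ρ φ₁ x ∧ LTLf.Sat ρ φ₂ x
  | .or φ₁ φ₂, x => LTLf.Sat ρ φ₁ x ∨ LTLf.Sat ρ φ₂ x
  | .next φ, x => x + 1 < ρ.length ∧ LTLf.Sat ρ φ (x + 1)
  | .wnext φ, x => x + 1 = ρ.length ∨ LTLf.Sat ρ φ (x + 1)
  | .until_ φ₁ φ₂, x => ∃ y, x ≤ y ∧ y < ρ.length ∧ LTLf.Sat ρ φ₂ y ∧
      ∀ z, x ≤ z → z < y → LTLf.Sat ρ φ₁ z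
  | .release φ₁ φ₂, x => ∀ y, x ≤ y → y < ρ.length →
      (LTLf.Sat ρ φ₂ y ∨ ∃ z, x ≤ z ∧ z < y ∧ LTLf.Sat ρ φ₁ z)

/-- `Subf θ φ`: `θ` is a subformula of `φ`. -/
inductive Subf {P : Type} : LTLf P → LTLf P → Prop where
  | refl (φ : LTLf P) : Subf φ φ
  | not_ {θ φ : LTLf P} : Subf θ φ → Subf θ (.not φ)
  | and_left {θ φ₁ φ₂ : LTLf P} : Subf θ φ₁ → Subf θ (.and φ₁ φ₂)
  | and_right {θ φ₁ φ₂ : LTLf P} : Subf θ φ₂ → Subf θ (.and φ₁ φ₂)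
  | or_left {θ φ₁ φ₂ : LTLf P} : Subf θ φ₁ → Subf θ (.or φ₁ φ₂)
  | or_right {θ φ₁ φ₂ : LTLf P} : Subf θ φ₂ → Subf θ (.or φ₁ φ₂)
  | next_ {θ φ : LTLf P} : Subf θ φ → Subf θ (.next φ)
  | wnext_ {θ φ : LTLf P} : Subf θ φ → Subf θ (.wnext φ)
  | until_left {θ φ₁ φ₂ : LTLf P} : Subf θ φ₁ → Subf θ (.until_ φ₁ φ₂)
  | until_right {θ φ₁ φ₂ : LTLf P} : Subf θ φ₂ → Subf θ (.until_ φ₁ φ₂)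
  | release_left {θ φ₁ φ₂ : LTLf P} : Subf θ φ₁ → Subf θ (.release φ₁ φ₂)
  | release_right {θ φ₁ φ₂ : LTLf P} : Subf θ φ₂ → Subf θ (.release φ₁ φ₂)

/-- The fussy MSO constraint for the subformula `θ` at position `x`, relative
to an assignment `Q` of sets of positions to formulas. -/
def FussyAt {P : Type} (ρ : List (Set P)) (Q : LTLf P → Set ℕ) :
    LTLf P → ℕ → Prop
  | .tt, x => x ∈ Q .tt
  | .ff, x => x ∉ Q .ff
  | .atom _, _ => True
  | .not θj, x => (x ∈ Q (.not θj) ↔ x ∉ Q θj)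
  | .and θj θk, x => (x ∈ Q (.and θj θk) ↔ (x ∈ Q θj ∧ x ∈ Q θk))
  | .or θj θk, x => (x ∈ Q (.or θj θk) ↔ (x ∈ Q θj ∨ x ∈ Q θk))
  | .next θj, x => (x ∈ Q (.next θj) ↔ (x + 1 < ρ.length ∧ x + 1 ∈ Q θj))
  | .wnext θj, x => (x ∈ Q (.wnext θj) ↔ (x + 1 = ρ.length ∨ x + 1 ∈ Q θj))
  | .until_ θj θk, x => (x ∈ Q (.until_ θj θk) ↔
      (x ∈ Q θk ∨ (x + 1 < ρ.length ∧ x ∈ Q θj ∧ x + 1 ∈ Q (.until_ θj θk))))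
  | .release θj θk, x => (x ∈ Q (.release θj θk) ↔
      (x ∈ Q θk ∧ (x + 1 = ρ.length ∨ x ∈ Q θj ∨ x + 1 ∈ Q (.release θj θk))))

/-- `Q` satisfies the fussy MSO constraints for `φ` on the trace `ρ`. -/
def FussyConstraints {P : Type} (ρ : List (Set P)) (Q : LTLf P → Set ℕ)
    (φ : LTLf P) : Prop :=
  ∀ θ : LTLf P, Subf θ φ → ∀ x : ℕ, x < ρ.length → FussyAt ρ Q θ x

lemma Subf.trans {P : Type} {a b c : LTLf P} (h1 : Subf a b) (h2 : Subf b c) :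
    Subf a c := by
  induction h2 with
  | refl => exact h1
  | not_ _ ih => exact .not_ ih
  | and_left _ ih => exact .and_left ih
  | and_right _ ih => exact .and_right ih
  | or_left _ ih => exact .or_left ih
  | or_right _ ih => exact .or_right ih
  | next_ _ ih => exact .next_ ih
  | wnext_ _ ih => exact .wnext_ ih
  | until_left _ ih => exact .until_left ih
  | until_right _ ih => exact .until_right ih
  | release_left _ ih => exact .release_left ih
  | release_right _ ih => exact .release_right ih

lemma sat_until {P : Type} (ρ : List (Set P)) (a b : LTLf P) (x : ℕ)
    (hx : x < ρ.length) :
    LTLf.Sat ρ (.until_ a b) x ↔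
      (LTLf.Sat ρ b x ∨ (x + 1 < ρ.length ∧ LTLf.Sat ρ a x ∧
        LTLf.Sat ρ (.until_ a b) (x + 1))) := by
  constructor
  · rintro ⟨y, hxy, hylen, hb, hall⟩
    rcases eq_or_lt_of_le hxy with rfl | hlt
    · exact Or.inl hb
    · exact Or.inr ⟨by omega, hall x le_rfl hlt,
        y, by omega, hylen, hb, fun z hz1 hz2 => hall z (by omega) hz2⟩
  · rintro (hb | ⟨h1, ha, y, hxy, hylen, hb, hall⟩)
    · exact ⟨x, le_rfl, hx, hb, fun z h1 h2 => by omega⟩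
    · refine ⟨y, by omega, hylen, hb, fun z hz1 hz2 => ?_⟩
      rcases eq_or_lt_of_le hz1 with rfl | h'
      · exact ha
      · exact hall z (by omega) hz2

lemma sat_release {P : Type} (ρ : List (Set P)) (a b : LTLf P) (x : ℕ)
    (hx : x < ρ.length) :
    LTLf.Sat ρ (.release a b) x ↔
      (LTLf.Sat ρ b x ∧ (x + 1 = ρ.length ∨ LTLf.Sat ρ a x ∨
        LTLf.Sat ρ (.release a b) (x + 1))) := by
  constructor
  · intro h
    have hb : LTLf.Sat ρ b x := by
      rcases h x le_rfl hx with hb | ⟨z, hz1, hz2, _⟩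
      · exact hb
      · omega
    refine ⟨hb, ?_⟩
    by_cases hlen : x + 1 = ρ.length
    · exact Or.inl hlen
    by_cases ha : LTLf.Sat ρ a x
    · exact Or.inr (Or.inl ha)
    refine Or.inr (Or.inr (fun y hy hylen => ?_))
    rcases h y (by omega) hylen with hb' | ⟨z, hz1, hz2, haz⟩
    · exact Or.inl hb'
    · refine Or.inr ⟨z, ?_, hz2, haz⟩
      rcases eq_or_lt_of_le hz1 with rfl | h'
      · exact absurd haz ha
      · omega
  · rintro ⟨hb, hrest⟩ y hy hylen
    rcases eq_or_lt_of_le hy with rfl | hlt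
    · exact Or.inl hb
    rcases hrest with hlen | ha | hrel
    · omega
    · exact Or.inr ⟨x, le_rfl, hlt, ha⟩
    · rcases hrel y (by omega) hylen with hb' | ⟨z, hz1, hz2, haz⟩
      · exact Or.inl hb'
      · exact Or.inr ⟨z, by omega, hz2, haz⟩

lemma mso_key {P : Type} (ρ : List (Set P)) (Q : LTLf P → Set ℕ) (φ : LTLf P)
    (hatom : ∀ p, Subf (.atom p) φ →
      Q (.atom p) = {x | x < ρ.length ∧ p ∈ ρ.getD x ∅})
    (hc : FussyConstraints ρ Q φ) :
    ∀ θ, Subf θ φ → ∀ x, x < ρ.length → (x ∈ Q θ ↔ LTLf.Sat ρ θ x) := by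
  intro θ
  induction θ with
  | tt =>
      intro h x hx
      have hcx := hc _ h x hx
      simp only [FussyAt] at hcx
      simp [LTLf.Sat, hcx]
  | ff =>
      intro h x hx
      have hcx := hc _ h x hx
      simp only [FussyAt] at hcx
      simp [LTLf.Sat, hcx]
  | atom p =>
      intro h x hx
      rw [hatom p h]
      simp [LTLf.Sat, hx]
  | not θj ih =>
      intro h x hx
      have hcx := hc _ h x hx
      simp only [FussyAt] at hcx
      rw [hcx]
      simp [LTLf.Sat, ih (Subf.trans (.not_ (.refl _)) h) x hx]
  | and θj θk ihj ihk =>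
      intro h x hx
      have hcx := hc _ h x hx
      simp only [FussyAt] at hcx
      rw [hcx]
      simp only [LTLf.Sat]
      rw [ihj (Subf.trans (.and_left (.refl _)) h) x hx,
        ihk (Subf.trans (.and_right (.refl _)) h) x hx]
  | or θj θk ihj ihk =>
      intro h x hx
      have hcx := hc _ h x hx
      simp only [FussyAt] at hcx
      rw [hcx]
      simp only [LTLf.Sat]
      rw [ihj (Subf.trans (.or_left (.refl _)) h) x hx,
        ihk (Subf.trans (.or_right (.refl _)) h) x hx]
  | next θj ih =>
      intro h x hx
      have hcx := hc _ h x hx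
      simp only [FussyAt] at hcx
      rw [hcx]
      simp only [LTLf.Sat]
      constructor
      · rintro ⟨h1, h2⟩
        exact ⟨h1, (ih (Subf.trans (.next_ (.refl _)) h) (x + 1) h1).1 h2⟩
      · rintro ⟨h1, h2⟩
        exact ⟨h1, (ih (Subf.trans (.next_ (.refl _)) h) (x + 1) h1).2 h2⟩
  | wnext θj ih =>
      intro h x hx
      have hcx := hc _ h x hx
      simp only [FussyAt] at hcx
      rw [hcx]
      simp only [LTLf.Sat]
      rcases Nat.lt_or_ge (x + 1) ρ.length with h1 | h1
      · rw [ih (Subf.trans (.wnext_ (.refl _)) h) (x + 1) h1]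
      · have heq : x + 1 = ρ.length := by omega
        simp [heq]
  | until_ a b iha ihb =>
      intro h x hx
      have hsa : Subf a φ := Subf.trans (.until_left (.refl _)) h
      have hsb : Subf b φ := Subf.trans (.until_right (.refl _)) h
      have H : ∀ n x, ρ.length - x = n → x < ρ.length →
          (x ∈ Q (.until_ a b) ↔ LTLf.Sat ρ (.until_ a b) x) := by
        intro n
        induction n with
        | zero => intro x hn hx; omega
        | succ n ihn =>
          intro x hn hx
          have hcx := hc _ h x hx
          simp only [FussyAt] at hcx
          rw [hcx, sat_until ρ a b x hx, ihb hsb x hx]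
          by_cases h1 : x + 1 < ρ.length
          · rw [iha hsa x hx, ihn (x + 1) (by omega) h1]
          · simp [h1]
      exact H (ρ.length - x) x rfl hx
  | release a b iha ihb =>
      intro h x hx
      have hsa : Subf a φ := Subf.trans (.release_left (.refl _)) h
      have hsb : Subf b φ := Subf.trans (.release_right (.refl _)) h
      have H : ∀ n x, ρ.length - x = n → x < ρ.length →
          (x ∈ Q (.release a b) ↔ LTLf.Sat ρ (.release a b) x) := by
        intro n
        induction n with
        | zero => intro x hn hx; omega
        | succ n ihn =>
          intro x hn hx
          have hcx := hc _ h x hx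
          simp only [FussyAt] at hcx
          rw [hcx, sat_release ρ a b x hx, ihb hsb x hx,
            iha hsa x hx]
          by_cases h1 : x + 1 < ρ.length
          · rw [ihn (x + 1) (by omega) h1]
          · have heq : x + 1 = ρ.length := by omega
            simp [heq]
      exact H (ρ.length - x) x rfl hx

/-- Correctness of the MSO encoding of LTLf. -/
theorem mso_encoding_correct {P : Type} (φ : LTLf P) (ρ : List (Set P))
    (hρ : ρ ≠ []) :
    LTLf.Sat ρ φ 0 ↔
      ∃ Q : LTLf P → Set ℕ,
        (∀ p : P, Subf (.atom p) φ →
          Q (.atom p) = {x | x < ρ.length ∧ p ∈ ρ.getD x ∅}) ∧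
        0 ∈ Q φ ∧
        FussyConstraints ρ Q φ := by
  have hlen : 0 < ρ.length := List.length_pos_iff.mpr hρ
  constructor
  · intro hsat
    refine ⟨fun θ => {x | x < ρ.length ∧ LTLf.Sat ρ θ x}, ?_, ⟨hlen, hsat⟩, ?_⟩
    · intro p _; rfl
    · intro θ _ x hx
      cases θ with
      | tt => simp [FussyAt, LTLf.Sat, hx]
      | ff => simp [FussyAt, LTLf.Sat]
      | atom p => simp [FussyAt]
      | not θj =>
          simp only [FussyAt, Set.mem_setOf_eq, LTLf.Sat]
          constructor
          · rintro ⟨_, h2⟩ ⟨_, h4⟩; exact h2 h4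
          · intro h1; exact ⟨hx, fun h2 => h1 ⟨hx, h2⟩⟩
      | and θj θk =>
          simp only [FussyAt, Set.mem_setOf_eq, LTLf.Sat]
          tauto
      | or θj θk =>
          simp only [FussyAt, Set.mem_setOf_eq, LTLf.Sat]
          tauto
      | next θj =>
          simp only [FussyAt, Set.mem_setOf_eq, LTLf.Sat]
          tauto
      | wnext θj =>
          simp only [FussyAt, Set.mem_setOf_eq, LTLf.Sat]
          have : x + 1 = ρ.length ∨ x + 1 < ρ.length := by omega
          tauto
      | until_ a b =>
          simp only [FussyAt, Set.mem_setOf_eq]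
          rw [sat_until ρ a b x hx]
          have : x + 1 = ρ.length ∨ x + 1 < ρ.length := by omega
          tauto
      | release a b =>
          simp only [FussyAt, Set.mem_setOf_eq]
          rw [sat_release ρ a b x hx]
          have : x + 1 = ρ.length ∨ x + 1 < ρ.length := by omega
          tauto
  · rintro ⟨Q, hatom, h0, hc⟩
    exact (mso_key ρ Q φ hatom hc φ (.refl φ) 0 hlen).1 h0
end

section
/- Let φ be an LTLf formula and ρ a finite trace. Define the canonical assignment Q by Q_θ = {x : 0 ≤ x < |ρ| and ρ, x ⊨ θ} for every subformula θ of φ. Then Q satisfies the fussy MSO constraints for φ on ρ. -/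
/-- The canonical assignment `Q_θ = {x : x < |ρ| ∧ ρ, x ⊨ θ}` satisfies the
fussy MSO constraints for `φ` on `ρ`. -/
theorem canonical_satisfies_fussy {P : Type} (φ : LTLf P) (ρ : List (Set P)) :
    FussyConstraints ρ (fun θ => {x | x < ρ.length ∧ LTLf.Sat ρ θ x}) φ := by
  intro θ _ x hx
  cases θ with
  | tt => exact ⟨hx, trivial⟩
  | ff => rintro ⟨_, h⟩; exact h
  | atom p => trivial
  | not θj =>
      simp only [FussyAt, Set.mem_setOf_eq, LTLf.Sat]
      tauto
  | and θj θk =>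
      simp only [FussyAt, Set.mem_setOf_eq, LTLf.Sat]
      tauto
  | or θj θk =>
      simp only [FussyAt, Set.mem_setOf_eq, LTLf.Sat]
      tauto
  | next θj =>
      simp only [FussyAt, Set.mem_setOf_eq, LTLf.Sat]
      tauto
  | wnext θj =>
      simp only [FussyAt, Set.mem_setOf_eq, LTLf.Sat]
      constructor
      · rintro ⟨_, h | h⟩
        · exact Or.inl h
        · rcases eq_or_lt_of_le (Nat.succ_le_of_lt hx) with he | hl
          · exact Or.inl he
          · exact Or.inr ⟨hl, h⟩
      · rintro (h | ⟨_, h⟩)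
        · exact ⟨hx, Or.inl h⟩
        · exact ⟨hx, Or.inr h⟩
  | until_ θj θk =>
      simp only [FussyAt, Set.mem_setOf_eq, LTLf.Sat]
      constructor
      · rintro ⟨_, y, hxy, hy, hk, hj⟩
        rcases eq_or_lt_of_le hxy with he | hl
        · exact Or.inl ⟨hx, he ▸ hk⟩
        · have h1 : x + 1 < ρ.length := lt_of_le_of_lt hl hy
          refine Or.inr ⟨h1, ⟨hx, hj x le_rfl hl⟩, h1,
            ⟨y, hl, hy, hk, fun z hz hzy => hj z (le_of_lt (Nat.lt_of_succ_le hz)) hzy⟩⟩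
      · rintro (⟨_, hk⟩ | ⟨h1, ⟨_, hj⟩, _, y, hxy, hy, hk, hjz⟩)
        · exact ⟨hx, x, le_rfl, hx, hk, fun z h1 h2 => absurd (lt_of_le_of_lt h1 h2) (lt_irrefl x)⟩
        · refine ⟨hx, y, le_of_lt (Nat.lt_of_succ_le hxy), hy, hk, fun z hz hzy => ?_⟩
          rcases eq_or_lt_of_le hz with he | hl
          · exact he ▸ hj
          · exact hjz z hl hzy
  | release θj θk =>
      simp only [FussyAt, Set.mem_setOf_eq, LTLf.Sat]
      constructor
      · rintro ⟨_, h⟩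
        have hk : LTLf.Sat ρ θk x := by
          rcases h x le_rfl hx with hk | ⟨z, h1, h2, _⟩
          · exact hk
          · omega
        refine ⟨⟨hx, hk⟩, ?_⟩
        rcases Nat.lt_or_ge (x + 1) ρ.length with h1 | h1
        · by_cases hj : LTLf.Sat ρ θj x
          · exact Or.inr (Or.inl ⟨hx, hj⟩)
          · refine Or.inr (Or.inr ⟨h1, fun y hxy hy => ?_⟩)
            rcases h y (le_of_lt (Nat.lt_of_succ_le hxy)) hy with hk' | ⟨z, hz1, hz2, hz3⟩
            · exact Or.inl hk'
            · rcases eq_or_lt_of_le hz1 with he | hl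
              · exact absurd (he ▸ hz3) hj
              · exact Or.inr ⟨z, hl, hz2, hz3⟩
        · exact Or.inl (by omega)
      · rintro ⟨⟨_, hk⟩, hrest⟩
        refine ⟨hx, fun y hxy hy => ?_⟩
        rcases eq_or_lt_of_le hxy with he | hl
        · exact Or.inl (he ▸ hk)
        · rcases hrest with he | ⟨_, hj⟩ | ⟨_, hrel⟩
          · omega
          · exact Or.inr ⟨x, le_rfl, hl, hj⟩
          · rcases hrel y hl hy with hk' | ⟨z, hz1, hz2, hz3⟩
            · exact Or.inl hk'
            · exact Or.inr ⟨z, le_of_lt (Nat.lt_of_succ_le hz1), hz2, hz3⟩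
end

section
/- Let φ be an LTLf formula, ρ a finite trace, and Q an assignment of sets of natural numbers to the subformulas of φ such that Q_p = {x : 0 ≤ x < |ρ| and p ∈ ρ[x]} for every atom p that is a subformula of φ and Q satisfies the fussy MSO constraints for φ on ρ. Then for every subformula θ of φ and every x with 0 ≤ x < |ρ|: x ∈ Q_θ if and only if ρ, x ⊨ θ. In particular the constraints determine Q uniquely on positions of ρ. -/
lemma Subf.trans_s8 {P : Type} {θ₁ θ₂ θ₃ : LTLf P} (h₁ : Subf θ₁ θ₂) (h₂ : Subf θ₂ θ₃) :
    Subf θ₁ θ₃ := by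
  induction h₂ with
  | refl => exact h₁
  | not_ _ ih => exact .not_ ih
  | and_left _ ih => exact .and_left ih
  | and_right _ ih => exact .and_right ih
  | or_left _ ih => exact .or_left ih
  | or_right _ ih => exact .or_right ih
  | next_ _ ih => exact .next_ ih
  | wnext_ _ ih => exact .wnext_ ih
  | until_left _ ih => exact .until_left ih
  | until_right _ ih => exact .until_right ih
  | release_left _ ih => exact .release_left ih
  | release_right _ ih => exact .release_right ih

lemma sat_until_iff {P : Type} (ρ : List (Set P)) (φ₁ φ₂ : LTLf P) (x : ℕ) (hx : x < ρ.length) :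
    LTLf.Sat ρ (.until_ φ₁ φ₂) x ↔
      LTLf.Sat ρ φ₂ x ∨ (x + 1 < ρ.length ∧ LTLf.Sat ρ φ₁ x ∧
        LTLf.Sat ρ (.until_ φ₁ φ₂) (x + 1)) := by
  constructor
  · rintro ⟨y, hxy, hy, h2, hall⟩
    rcases eq_or_lt_of_le hxy with rfl | hlt
    · exact Or.inl h2
    · refine Or.inr ⟨lt_of_le_of_lt hlt hy, hall x le_rfl hlt,
        ⟨y, hlt, hy, h2, fun z hz hzy => hall z (le_of_lt (lt_of_lt_of_le (Nat.lt_succ_self x) hz)) hzy⟩⟩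
  · rintro (h | ⟨hlen, h1, y, hxy, hy, h2, hall⟩)
    · exact ⟨x, le_rfl, by assumption, h, fun z hz hzy => absurd (lt_of_le_of_lt hz hzy) (lt_irrefl x)⟩
    · exact ⟨y, le_trans (Nat.le_succ x) hxy, hy, h2, fun z hz hzy => by
        rcases eq_or_lt_of_le hz with rfl | hlt
        · exact h1
        · exact hall z hlt hzy⟩

lemma sat_release_iff {P : Type} (ρ : List (Set P)) (φ₁ φ₂ : LTLf P) (x : ℕ)
    (hx : x < ρ.length) :
    LTLf.Sat ρ (.release φ₁ φ₂) x ↔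
      LTLf.Sat ρ φ₂ x ∧ (x + 1 = ρ.length ∨ LTLf.Sat ρ φ₁ x ∨
        LTLf.Sat ρ (.release φ₁ φ₂) (x + 1)) := by
  constructor
  · intro h
    have h2 : LTLf.Sat ρ φ₂ x := by
      rcases h x le_rfl hx with h2 | ⟨z, hz1, hz2, _⟩
      · exact h2
      · omega
    refine ⟨h2, ?_⟩
    rcases Nat.lt_or_ge (x + 1) ρ.length with hlen | hlen
    · by_cases h1 : LTLf.Sat ρ φ₁ x
      · exact Or.inr (Or.inl h1)
      · refine Or.inr (Or.inr (fun y hy hylen => ?_))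
        rcases h y (le_trans (Nat.le_succ x) hy) hylen with hk | ⟨z, hz1, hz2, hz3⟩
        · exact Or.inl hk
        · refine Or.inr ⟨z, ?_, hz2, hz3⟩
          rcases eq_or_lt_of_le hz1 with rfl | hlt
          · exact absurd hz3 h1
          · exact hlt
    · exact Or.inl (by omega)
  · rintro ⟨h2, hrest⟩ y hxy hylen
    rcases eq_or_lt_of_le hxy with rfl | hlt
    · exact Or.inl h2
    · rcases hrest with heq | h1 | hR
      · omega
      · exact Or.inr ⟨x, le_rfl, hlt, h1⟩
      · rcases hR y hlt hylen with hk | ⟨z, hz1, hz2, hz3⟩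
        · exact Or.inl hk
        · exact Or.inr ⟨z, le_trans (Nat.le_succ x) hz1, hz2, hz3⟩

/-- Any assignment that interprets the atoms canonically and satisfies the
fussy MSO constraints agrees with LTLf satisfaction on all subformulas and all
positions of the trace: the constraints determine `Q` uniquely on positions of `ρ`. -/
theorem fussy_determines_satisfaction {P : Type} (φ : LTLf P)
    (ρ : List (Set P)) (Q : LTLf P → Set ℕ)
    (hatoms : ∀ p : P, Subf (.atom p) φ →
      Q (.atom p) = {x | x < ρ.length ∧ p ∈ ρ.getD x ∅})
    (hQ : FussyConstraints ρ Q φ) :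
    ∀ θ : LTLf P, Subf θ φ → ∀ x : ℕ, x < ρ.length →
      (x ∈ Q θ ↔ LTLf.Sat ρ θ x) := by
  intro θ
  induction θ with
  | tt =>
    intro hsub x hx
    have := hQ _ hsub x hx
    simp only [FussyAt] at this
    simp [LTLf.Sat, this]
  | ff =>
    intro hsub x hx
    have := hQ _ hsub x hx
    simp only [FussyAt] at this
    simp [LTLf.Sat, this]
  | atom p =>
    intro hsub x hx
    rw [hatoms p hsub]
    simp [LTLf.Sat, hx]
  | not θj ih =>
    intro hsub x hx
    have hc := hQ _ hsub x hx
    simp only [FussyAt] at hc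
    rw [hc, ih (Subf.trans_s8 (.refl _) hsub |> fun _ => Subf.trans_s8 (.not_ (.refl _)) hsub) x hx]
    rfl
  | and θj θk ihj ihk =>
    intro hsub x hx
    have hc := hQ _ hsub x hx
    simp only [FussyAt] at hc
    rw [hc, ihj (Subf.trans_s8 (.and_left (.refl _)) hsub) x hx,
      ihk (Subf.trans_s8 (.and_right (.refl _)) hsub) x hx]
    rfl
  | or θj θk ihj ihk =>
    intro hsub x hx
    have hc := hQ _ hsub x hx
    simp only [FussyAt] at hc
    rw [hc, ihj (Subf.trans_s8 (.or_left (.refl _)) hsub) x hx,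
      ihk (Subf.trans_s8 (.or_right (.refl _)) hsub) x hx]
    rfl
  | next θj ih =>
    intro hsub x hx
    have hc := hQ _ hsub x hx
    simp only [FussyAt] at hc
    rw [hc]
    constructor
    · rintro ⟨h1, h2⟩
      exact ⟨h1, (ih (Subf.trans_s8 (.next_ (.refl _)) hsub) (x+1) h1).mp h2⟩
    · rintro ⟨h1, h2⟩
      exact ⟨h1, (ih (Subf.trans_s8 (.next_ (.refl _)) hsub) (x+1) h1).mpr h2⟩
  | wnext θj ih =>
    intro hsub x hx
    have hc := hQ _ hsub x hx
    simp only [FussyAt] at hc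
    rw [hc]
    show _ ↔ LTLf.Sat ρ (.wnext θj) x
    simp only [LTLf.Sat]
    rcases Nat.lt_or_ge (x+1) ρ.length with hlen | hlen
    · rw [ih (Subf.trans_s8 (.wnext_ (.refl _)) hsub) (x+1) hlen]
    · have : x + 1 = ρ.length := by omega
      simp [this]
  | until_ θj θk ihj ihk =>
    intro hsub
    have hj := ihj (Subf.trans_s8 (.until_left (.refl _)) hsub)
    have hk := ihk (Subf.trans_s8 (.until_right (.refl _)) hsub)
    have key : ∀ n x, ρ.length - x = n → x < ρ.length →
        (x ∈ Q (.until_ θj θk) ↔ LTLf.Sat ρ (.until_ θj θk) x) := by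
      intro n
      induction n using Nat.strong_induction_on with
      | _ n ihn =>
        intro x hn hx
        have hc := hQ _ hsub x hx
        simp only [FussyAt] at hc
        rw [hc, sat_until_iff ρ θj θk x hx, hj x hx, hk x hx]
        rcases Nat.lt_or_ge (x+1) ρ.length with hlen | hlen
        · rw [ihn (ρ.length - (x+1)) (by omega) (x+1) rfl hlen]
        · constructor
          · rintro (h | ⟨h1, _⟩)
            · exact Or.inl h
            · omega
          · rintro (h | ⟨h1, _⟩)
            · exact Or.inl h
            · omega
    intro x hx
    exact key (ρ.length - x) x rfl hx
  | release θj θk ihj ihk =>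
    intro hsub
    have hj := ihj (Subf.trans_s8 (.release_left (.refl _)) hsub)
    have hk := ihk (Subf.trans_s8 (.release_right (.refl _)) hsub)
    have key : ∀ n x, ρ.length - x = n → x < ρ.length →
        (x ∈ Q (.release θj θk) ↔ LTLf.Sat ρ (.release θj θk) x) := by
      intro n
      induction n using Nat.strong_induction_on with
      | _ n ihn =>
        intro x hn hx
        have hc := hQ _ hsub x hx
        simp only [FussyAt] at hc
        rw [hc, sat_release_iff ρ θj θk x hx, hj x hx, hk x hx]
        rcases Nat.lt_or_ge (x+1) ρ.length with hlen | hlen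
        · rw [ihn (ρ.length - (x+1)) (by omega) (x+1) rfl hlen]
        · have heq : x + 1 = ρ.length := by omega
          constructor
          · rintro ⟨h2, _⟩
            exact ⟨h2, Or.inl heq⟩
          · rintro ⟨h2, _⟩
            exact ⟨h2, Or.inl heq⟩
    intro x hx
    exact key (ρ.length - x) x rfl hx
end

section
/- (Reversal theorem.) Let φ be an LTLf formula built from tt, ff, atoms, ¬, ∧, X, and U, and let ρ be a finite trace. Then ρ ⊨ φ (LTLf satisfaction at position 0) if and only if ρ^R ⊨ φ^R (PLTLf satisfaction at position |ρ|−1). Equivalently, the language of φ^R is exactly the reverse language of φ: L(φ^R) = L^R(φ). -/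
/-- Syntax of PLTLf (past LTLf) formulas over atomic propositions `P`. -/
inductive PLTLf (P : Type) : Type where
  | tt : PLTLf P
  | ff : PLTLf P
  | atom : P → PLTLf P
  | not : PLTLf P → PLTLf P
  | and : PLTLf P → PLTLf P → PLTLf P
  | yesterday : PLTLf P → PLTLf P
  | since : PLTLf P → PLTLf P → PLTLf P

/-- Satisfaction `ρ, x ⊨ ψ` of a PLTLf formula on a finite trace
`ρ : List (Set P)` at position `x`. -/
def PLTLf.Sat {P : Type} (ρ : List (Set P)) : PLTLf P → ℕ → Prop
  | .tt, _ => True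
  | .ff, _ => False
  | .atom p, x => p ∈ ρ.getD x ∅
  | .not ψ, x => ¬ PLTLf.Sat ρ ψ x
  | .and ψ₁ ψ₂, x => PLTLf.Sat ρ ψ₁ x ∧ PLTLf.Sat ρ ψ₂ x
  | .yesterday ψ, x => 1 ≤ x ∧ PLTLf.Sat ρ ψ (x - 1)
  | .since ψ₁ ψ₂, x => ∃ y, y ≤ x ∧ PLTLf.Sat ρ ψ₂ y ∧
      ∀ z, y < z → z ≤ x → PLTLf.Sat ρ ψ₁ z

/-- Syntax of LTLf formulas built from `tt`, `ff`, atoms, `¬`, `∧`, `X`, `U`. -/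
inductive LTLfB (P : Type) : Type where
  | tt : LTLfB P
  | ff : LTLfB P
  | atom : P → LTLfB P
  | not : LTLfB P → LTLfB P
  | and : LTLfB P → LTLfB P → LTLfB P
  | next : LTLfB P → LTLfB P
  | until_ : LTLfB P → LTLfB P → LTLfB P

/-- Satisfaction `ρ, x ⊨ φ` of an LTLf formula on a finite trace. -/
def LTLfB.Sat {P : Type} (ρ : List (Set P)) : LTLfB P → ℕ → Prop
  | .tt, _ => True
  | .ff, _ => False
  | .atom p, x => p ∈ ρ.getD x ∅
  | .not φ, x => ¬ LTLfB.Sat ρ φ x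
  | .and φ₁ φ₂, x => LTLfB.Sat ρ φ₁ x ∧ LTLfB.Sat ρ φ₂ x
  | .next φ, x => x + 1 < ρ.length ∧ LTLfB.Sat ρ φ (x + 1)
  | .until_ φ₁ φ₂, x => ∃ y, x ≤ y ∧ y < ρ.length ∧ LTLfB.Sat ρ φ₂ y ∧
      ∀ z, x ≤ z → z < y → LTLfB.Sat ρ φ₁ z

/-- The reversal `φ^R` of an LTLf formula: replace `X` by `Y` and `U` by `S`,
leaving the Boolean structure unchanged. -/
def LTLfB.rev {P : Type} : LTLfB P → PLTLf P
  | .tt => .tt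
  | .ff => .ff
  | .atom p => .atom p
  | .not φ => .not φ.rev
  | .and φ₁ φ₂ => .and φ₁.rev φ₂.rev
  | .next φ => .yesterday φ.rev
  | .until_ φ₁ φ₂ => .since φ₁.rev φ₂.rev

lemma key_rev {P : Type} (φ : LTLfB P) : ∀ (ρ : List (Set P)) (x : ℕ), x < ρ.length →
    (LTLfB.Sat ρ φ x ↔ PLTLf.Sat ρ.reverse φ.rev (ρ.length - 1 - x)) := by
  induction φ with
  | tt => intro ρ x hx; simp [LTLfB.Sat, PLTLf.Sat, LTLfB.rev]
  | ff => intro ρ x hx; simp [LTLfB.Sat, PLTLf.Sat, LTLfB.rev]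
  | atom p =>
    intro ρ x hx
    simp only [LTLfB.Sat, PLTLf.Sat, LTLfB.rev, List.getD_eq_getElem?_getD]
    rw [List.getElem?_reverse (by omega)]
    congr! 3
    omega
  | not φ ih =>
    intro ρ x hx
    simp only [LTLfB.Sat, PLTLf.Sat, LTLfB.rev, ih ρ x hx]
  | and φ₁ φ₂ ih₁ ih₂ =>
    intro ρ x hx
    simp only [LTLfB.Sat, PLTLf.Sat, LTLfB.rev, ih₁ ρ x hx, ih₂ ρ x hx]
  | next φ ih =>
    intro ρ x hx
    simp only [LTLfB.Sat, PLTLf.Sat, LTLfB.rev]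
    constructor
    · rintro ⟨h1, h2⟩
      refine ⟨by omega, ?_⟩
      have heq : ρ.length - 1 - x - 1 = ρ.length - 1 - (x + 1) := by omega
      rw [heq]
      exact (ih ρ (x + 1) h1).mp h2
    · rintro ⟨h1, h2⟩
      have hx1 : x + 1 < ρ.length := by omega
      refine ⟨hx1, (ih ρ (x + 1) hx1).mpr ?_⟩
      have heq : ρ.length - 1 - (x + 1) = ρ.length - 1 - x - 1 := by omega
      rw [heq]
      exact h2
  | until_ φ₁ φ₂ ih₁ ih₂ =>
    intro ρ x hx
    simp only [LTLfB.Sat, PLTLf.Sat, LTLfB.rev]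
    constructor
    · rintro ⟨y, hxy, hyl, h2, h1⟩
      refine ⟨ρ.length - 1 - y, by omega, (ih₂ ρ y hyl).mp h2, ?_⟩
      intro z hz1 hz2
      have hz : ρ.length - 1 - z < ρ.length := by omega
      have := (ih₁ ρ (ρ.length - 1 - z) hz).mp (h1 _ (by omega) (by omega))
      convert this using 2
      omega
    · rintro ⟨y, hy, h2, h1⟩
      refine ⟨ρ.length - 1 - y, by omega, by omega, (ih₂ ρ (ρ.length - 1 - y) (by omega)).mpr ?_, ?_⟩
      · convert h2 using 2; omega
      · intro z hz1 hz2
        refine (ih₁ ρ z (by omega)).mpr ?_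
        exact h1 _ (by omega) (by omega)

/-- Reversal theorem: `ρ ⊨ φ` (LTLf satisfaction at position 0) iff
`ρ^R ⊨ φ^R` (PLTLf satisfaction at the last position); equivalently, the
language of `φ^R` is exactly the reverse language of `φ`. -/
theorem reversal_theorem {P : Type} (φ : LTLfB P) (ρ : List (Set P))
    (hρ : ρ ≠ []) :
    (LTLfB.Sat ρ φ 0 ↔ PLTLf.Sat ρ.reverse φ.rev (ρ.length - 1)) ∧
    {σ : List (Set P) | σ ≠ [] ∧ PLTLf.Sat σ φ.rev (σ.length - 1)} =
      (fun σ : List (Set P) => σ.reverse) ''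
        {σ : List (Set P) | σ ≠ [] ∧ LTLfB.Sat σ φ 0} := by
  have h0 : 0 < ρ.length := List.length_pos_iff.mpr hρ
  constructor
  · simpa using key_rev φ ρ 0 h0
  · ext σ
    simp only [Set.mem_setOf_eq, Set.mem_image]
    constructor
    · rintro ⟨hσ, hs⟩
      refine ⟨σ.reverse, ⟨by simpa using hσ, ?_⟩, by simp⟩
      have hl : 0 < σ.reverse.length := by simpa using List.length_pos_iff.mpr hσ
      rw [key_rev φ σ.reverse 0 hl]
      simpa using hs
    · rintro ⟨τ, ⟨hτ, hs⟩, rfl⟩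
      have hl : 0 < τ.length := List.length_pos_iff.mpr hτ
      refine ⟨by simpa using hτ, ?_⟩
      have := (key_rev φ τ 0 hl).mp hs
      simpa using this
end

section
/- (Soundness of BNF-Sloppy fails.) Over the atom set P = {a}, consider the finite trace ρ of length 2 with ρ[0] = ∅ and ρ[1] = {a}, and the BNF formula φ = ¬(tt U a). Then ρ ⊭ φ, yet there exist sets Q1 and Q2 of natural numbers (intended for ¬(tt U a) and tt U a respectively) such that Q_a = {x : 0 ≤ x < 2 and a ∈ ρ[x]} = {1}, 0 ∈ Q1, and for every x ∈ {0, 1}: (x ∈ Q1 ⇒ x ∉ Q2) and (x ∈ Q2 ⇒ (x ∈ Q_a or (x + 1 < 2 and x + 1 ∈ Q2))). Hence the Sloppy (implication-only) constraint form is incorrect for formulas in Boolean Normal Form. -/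
/-- Soundness of the BNF-Sloppy encoding fails: on the trace `ρ = ∅, {a}`
over the single atom `a`, the BNF formula `¬(tt U a)` is not satisfied, yet
there are sets `Q1` (for `¬(tt U a)`) and `Q2` (for `tt U a`) with `0 ∈ Q1`
that satisfy all the sloppy (implication-only) constraints. -/
theorem bnf_sloppy_unsound :
    let ρ : List (Set Unit) := [∅, {()}]
    ¬ LTLf.Sat ρ (.not (.until_ .tt (.atom ()))) 0 ∧
    {x : ℕ | x < 2 ∧ () ∈ ρ.getD x ∅} = ({1} : Set ℕ) ∧
    ∃ Q1 Q2 : Set ℕ,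
      0 ∈ Q1 ∧
      ∀ x : ℕ, x < 2 →
        (x ∈ Q1 → x ∉ Q2) ∧
        (x ∈ Q2 → (x ∈ {x : ℕ | x < 2 ∧ () ∈ ρ.getD x ∅} ∨
          (x + 1 < 2 ∧ x + 1 ∈ Q2))) := by
  intro ρ
  refine ⟨?_, ?_, Set.univ, ∅, trivial, ?_⟩
  · simp only [LTLf.Sat, not_not]
    exact ⟨1, by norm_num, by simp [ρ], by simp [LTLf.Sat, ρ], fun z _ hz => trivial⟩
  · ext x
    simp only [Set.mem_setOf_eq, Set.mem_singleton_iff, ρ]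
    constructor
    · rintro ⟨hx, h⟩
      interval_cases x <;> simp_all
    · rintro rfl; simp
  · intro x _
    exact ⟨fun _ h => h, fun h => h.elim⟩
end

section
/- (Correctness of the Lean MSO encoding.) Let φ be an LTLf formula and ρ a finite trace. Then ρ ⊨ φ if and only if there exists an assignment Q of a set Q_{θa} of natural numbers to every U-subformula and R-subformula θa of φ such that 0 ∈ lean(φ) and for every x with 0 ≤ x < |ρ|: for every U-subformula θa = θj U θk of φ, x ∈ Q_{θa} ⇔ (x ∈ lean(θk) or (x + 1 < |ρ| and x ∈ lean(θj) and x + 1 ∈ Q_{θa})); and for every R-subformula θa = θj R θk of φ, x ∈ Q_{θa} ⇔ (x ∈ lean(θk) and (x + 1 = |ρ| or x ∈ lean(θj) or x + 1 ∈ Q_{θa})). -/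
/-- `θ` is a `U`-subformula or an `R`-subformula (i.e. its top connective is
Until or Release). -/
def IsUR {P : Type} : LTLf P → Prop
  | .until_ _ _ => True
  | .release _ _ => True
  | _ => False

/-- The lean second-order term `lean(θ)`: the set of positions associated to
`θ`, built from the trace `ρ` and the assignment `Q` of sets to `U`- and
`R`-subformulas. -/
def leanSet {P : Type} (ρ : List (Set P)) (Q : LTLf P → Set ℕ) :
    LTLf P → Set ℕ
  | .tt => {x | x < ρ.length}
  | .ff => ∅
  | .atom p => {x | x < ρ.length ∧ p ∈ ρ.getD x ∅}
  | .not θj => {x | x < ρ.length} \ leanSet ρ Q θj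
  | .and θj θk => leanSet ρ Q θj ∩ leanSet ρ Q θk
  | .or θj θk => leanSet ρ Q θj ∪ leanSet ρ Q θk
  | .next θj => {x | x + 1 ∈ leanSet ρ Q θj} \ {ρ.length - 1}
  | .wnext θj => {x | x + 1 ∈ leanSet ρ Q θj} ∪ {ρ.length - 1}
  | .until_ θj θk => Q (.until_ θj θk)
  | .release θj θk => Q (.release θj θk)

/-- One-step unfolding of the Until semantics. -/
lemma sat_until_unfold {P : Type} (ρ : List (Set P)) (θj θk : LTLf P) (x : ℕ)
    (hx : x < ρ.length) :
    LTLf.Sat ρ (.until_ θj θk) x ↔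
      LTLf.Sat ρ θk x ∨ (x + 1 < ρ.length ∧ LTLf.Sat ρ θj x ∧
        LTLf.Sat ρ (.until_ θj θk) (x + 1)) := by
  constructor
  · rintro ⟨y, hxy, hylen, hk, hall⟩
    rcases eq_or_lt_of_le hxy with rfl | hlt
    · exact Or.inl hk
    · refine Or.inr ⟨lt_of_le_of_lt hlt hylen, hall x le_rfl hlt,
        y, hlt, hylen, hk, ?_⟩
      exact fun z hz1 hz2 => hall z (le_trans (Nat.le_succ x) hz1) hz2
  · rintro (hk | ⟨h1, hj, y, hxy, hylen, hk, hall⟩)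
    · exact ⟨x, le_rfl, hx, hk, fun z hz1 hz2 => absurd hz2 (not_lt.mpr hz1)⟩
    · refine ⟨y, le_trans (Nat.le_succ x) hxy, hylen, hk, fun z hz1 hz2 => ?_⟩
      rcases eq_or_lt_of_le hz1 with rfl | hlt
      · exact hj
      · exact hall z hlt hz2

/-- One-step unfolding of the Release semantics. -/
lemma sat_release_unfold {P : Type} (ρ : List (Set P)) (θj θk : LTLf P) (x : ℕ)
    (hx : x < ρ.length) :
    LTLf.Sat ρ (.release θj θk) x ↔
      LTLf.Sat ρ θk x ∧ (x + 1 = ρ.length ∨ LTLf.Sat ρ θj x ∨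
        LTLf.Sat ρ (.release θj θk) (x + 1)) := by
  constructor
  · intro h
    have hk : LTLf.Sat ρ θk x := by
      rcases h x le_rfl hx with hk | ⟨z, hz1, hz2, _⟩
      · exact hk
      · omega
    refine ⟨hk, ?_⟩
    by_cases hlen : x + 1 = ρ.length
    · exact Or.inl hlen
    by_cases hj : LTLf.Sat ρ θj x
    · exact Or.inr (Or.inl hj)
    refine Or.inr (Or.inr (fun y hy1 hy2 => ?_))
    rcases h y (le_trans (Nat.le_succ x) hy1) hy2 with hk' | ⟨z, hz1, hz2, hjz⟩
    · exact Or.inl hk'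
    · refine Or.inr ⟨z, ?_, hz2, hjz⟩
      rcases eq_or_lt_of_le hz1 with rfl | h'
      · exact absurd hjz hj
      · exact h'
  · rintro ⟨hk, hrest⟩ y hy1 hy2
    rcases eq_or_lt_of_le hy1 with rfl | hlt
    · exact Or.inl hk
    rcases hrest with hlen | hj | hrel
    · omega
    · exact Or.inr ⟨x, le_rfl, hlt, hj⟩
    · rcases hrel y hlt hy2 with hk' | ⟨z, hz1, hz2, hjz⟩
      · exact Or.inl hk'
      · exact Or.inr ⟨z, le_trans (Nat.le_succ x) hz1, hz2, hjz⟩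

/-- The canonical assignment: the set of positions where the formula holds. -/
def Qsat {P : Type} (ρ : List (Set P)) (θ : LTLf P) : Set ℕ :=
  {x | x < ρ.length ∧ LTLf.Sat ρ θ x}

lemma leanSet_Qsat {P : Type} (ρ : List (Set P)) (hρ : ρ ≠ []) (θ : LTLf P) :
    ∀ x, x ∈ leanSet ρ (Qsat ρ) θ ↔ (x < ρ.length ∧ LTLf.Sat ρ θ x) := by
  have hlen : 0 < ρ.length := List.length_pos_iff.mpr hρ
  induction θ with
  | tt => intro x; simp [leanSet, LTLf.Sat, Set.mem_setOf_eq]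
  | ff => intro x; simp [leanSet, LTLf.Sat]
  | atom p => intro x; simp [leanSet, LTLf.Sat, Set.mem_setOf_eq]
  | not θj ih =>
      intro x
      simp only [leanSet, Set.mem_diff, Set.mem_setOf_eq, LTLf.Sat, ih x]
      tauto
  | and θj θk ihj ihk =>
      intro x
      simp only [leanSet, Set.mem_inter_iff, LTLf.Sat, ihj x, ihk x]
      tauto
  | or θj θk ihj ihk =>
      intro x
      simp only [leanSet, Set.mem_union, LTLf.Sat, ihj x, ihk x]
      tauto
  | next θj ih =>
      intro x
      simp only [leanSet, Set.mem_diff, Set.mem_setOf_eq, Set.mem_singleton_iff,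
        LTLf.Sat, ih (x + 1)]
      constructor
      · rintro ⟨⟨h1, h2⟩, h3⟩; exact ⟨by omega, h1, h2⟩
      · rintro ⟨h1, h2, h3⟩; exact ⟨⟨h2, h3⟩, by omega⟩
  | wnext θj ih =>
      intro x
      simp only [leanSet, Set.mem_union, Set.mem_setOf_eq, Set.mem_singleton_iff,
        LTLf.Sat, ih (x + 1)]
      constructor
      · rintro (⟨h1, h2⟩ | h)
        · exact ⟨by omega, Or.inr h2⟩
        · exact ⟨by omega, Or.inl (by omega)⟩
      · rintro ⟨h1, h2 | h2⟩
        · exact Or.inr (by omega)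
        · by_cases h3 : x + 1 < ρ.length
          · exact Or.inl ⟨h3, h2⟩
          · exact Or.inr (by omega)
  | until_ θj θk ihj ihk =>
      intro x; simp [leanSet, Qsat, Set.mem_setOf_eq]
  | release θj θk ihj ihk =>
      intro x; simp [leanSet, Qsat, Set.mem_setOf_eq]

/-- Under the local fixpoint constraint for an Until formula, membership in `Q`
coincides with satisfaction, assuming the subformulas already coincide. -/
lemma until_Q_iff {P : Type} (ρ : List (Set P)) (Q : LTLf P → Set ℕ)
    (θj θk : LTLf P)
    (hc : ∀ x, x < ρ.length →
      (x ∈ Q (.until_ θj θk) ↔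
        (x ∈ leanSet ρ Q θk ∨
          (x + 1 < ρ.length ∧ x ∈ leanSet ρ Q θj ∧ x + 1 ∈ Q (.until_ θj θk)))))
    (hj : ∀ x, x < ρ.length → (x ∈ leanSet ρ Q θj ↔ LTLf.Sat ρ θj x))
    (hk : ∀ x, x < ρ.length → (x ∈ leanSet ρ Q θk ↔ LTLf.Sat ρ θk x)) :
    ∀ x, x < ρ.length →
      (x ∈ Q (.until_ θj θk) ↔ LTLf.Sat ρ (.until_ θj θk) x) := by
  suffices h : ∀ n x, ρ.length - x ≤ n → x < ρ.length →
      (x ∈ Q (.until_ θj θk) ↔ LTLf.Sat ρ (.until_ θj θk) x) by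
    intro x hx; exact h (ρ.length - x) x le_rfl hx
  intro n
  induction n with
  | zero => intro x h1 h2; omega
  | succ n ih =>
      intro x h1 h2
      rw [hc x h2, sat_until_unfold ρ θj θk x h2, hk x h2]
      constructor
      · rintro (h | ⟨hb, hcj, hq⟩)
        · exact Or.inl h
        · exact Or.inr ⟨hb, (hj x h2).1 hcj, (ih (x + 1) (by omega) hb).1 hq⟩
      · rintro (h | ⟨hb, hcj, hq⟩)
        · exact Or.inl h
        · exact Or.inr ⟨hb, (hj x h2).2 hcj, (ih (x + 1) (by omega) hb).2 hq⟩

/-- Under the local fixpoint constraint for a Release formula, membership in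
`Q` coincides with satisfaction, assuming the subformulas already coincide. -/
lemma release_Q_iff {P : Type} (ρ : List (Set P)) (Q : LTLf P → Set ℕ)
    (θj θk : LTLf P)
    (hc : ∀ x, x < ρ.length →
      (x ∈ Q (.release θj θk) ↔
        (x ∈ leanSet ρ Q θk ∧
          (x + 1 = ρ.length ∨ x ∈ leanSet ρ Q θj ∨ x + 1 ∈ Q (.release θj θk)))))
    (hj : ∀ x, x < ρ.length → (x ∈ leanSet ρ Q θj ↔ LTLf.Sat ρ θj x))
    (hk : ∀ x, x < ρ.length → (x ∈ leanSet ρ Q θk ↔ LTLf.Sat ρ θk x)) :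
    ∀ x, x < ρ.length →
      (x ∈ Q (.release θj θk) ↔ LTLf.Sat ρ (.release θj θk) x) := by
  suffices h : ∀ n x, ρ.length - x ≤ n → x < ρ.length →
      (x ∈ Q (.release θj θk) ↔ LTLf.Sat ρ (.release θj θk) x) by
    intro x hx; exact h (ρ.length - x) x le_rfl hx
  intro n
  induction n with
  | zero => intro x h1 h2; omega
  | succ n ih =>
      intro x h1 h2
      rw [hc x h2, sat_release_unfold ρ θj θk x h2, hk x h2]
      constructor
      · rintro ⟨hck, hlen | hcj | hq⟩
        · exact ⟨hck, Or.inl hlen⟩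
        · exact ⟨hck, Or.inr (Or.inl ((hj x h2).1 hcj))⟩
        · by_cases hb : x + 1 < ρ.length
          · exact ⟨hck, Or.inr (Or.inr ((ih (x + 1) (by omega) hb).1 hq))⟩
          · exact ⟨hck, Or.inl (by omega)⟩
      · rintro ⟨hck, hlen | hcj | hq⟩
        · exact ⟨hck, Or.inl hlen⟩
        · exact ⟨hck, Or.inr (Or.inl ((hj x h2).2 hcj))⟩
        · by_cases hb : x + 1 < ρ.length
          · exact ⟨hck, Or.inr (Or.inr ((ih (x + 1) (by omega) hb).2 hq))⟩
          · exact ⟨hck, Or.inl (by omega)⟩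

/-- Main inductive lemma: if `Q` satisfies the local fixpoint constraints for
all U- and R-subformulas of `θ`, then `lean(θ)` coincides with satisfaction
on positions of the trace. -/
lemma lean_iff_sat {P : Type} (ρ : List (Set P)) (Q : LTLf P → Set ℕ) :
    ∀ θ : LTLf P,
    (∀ θj θk : LTLf P, Subf (.until_ θj θk) θ → ∀ x, x < ρ.length →
      (x ∈ Q (.until_ θj θk) ↔
        (x ∈ leanSet ρ Q θk ∨
          (x + 1 < ρ.length ∧ x ∈ leanSet ρ Q θj ∧
            x + 1 ∈ Q (.until_ θj θk))))) →
    (∀ θj θk : LTLf P, Subf (.release θj θk) θ → ∀ x, x < ρ.length →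
      (x ∈ Q (.release θj θk) ↔
        (x ∈ leanSet ρ Q θk ∧
          (x + 1 = ρ.length ∨ x ∈ leanSet ρ Q θj ∨
            x + 1 ∈ Q (.release θj θk))))) →
    ∀ x, x < ρ.length → (x ∈ leanSet ρ Q θ ↔ LTLf.Sat ρ θ x) := by
  intro θ
  induction θ with
  | tt => intro _ _ x hx; simp [leanSet, LTLf.Sat, Set.mem_setOf_eq, hx]
  | ff => intro _ _ x hx; simp [leanSet, LTLf.Sat]
  | atom p => intro _ _ x hx; simp [leanSet, LTLf.Sat, Set.mem_setOf_eq, hx]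
  | not θj ih =>
      intro hU hR x hx
      have := ih (fun a b h => hU a b (Subf.not_ h))
        (fun a b h => hR a b (Subf.not_ h)) x hx
      simp only [leanSet, Set.mem_diff, Set.mem_setOf_eq, LTLf.Sat, this]
      tauto
  | and θj θk ihj ihk =>
      intro hU hR x hx
      have h1 := ihj (fun a b h => hU a b (Subf.and_left h))
        (fun a b h => hR a b (Subf.and_left h)) x hx
      have h2 := ihk (fun a b h => hU a b (Subf.and_right h))
        (fun a b h => hR a b (Subf.and_right h)) x hx
      simp only [leanSet, Set.mem_inter_iff, LTLf.Sat, h1, h2]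
  | or θj θk ihj ihk =>
      intro hU hR x hx
      have h1 := ihj (fun a b h => hU a b (Subf.or_left h))
        (fun a b h => hR a b (Subf.or_left h)) x hx
      have h2 := ihk (fun a b h => hU a b (Subf.or_right h))
        (fun a b h => hR a b (Subf.or_right h)) x hx
      simp only [leanSet, Set.mem_union, LTLf.Sat, h1, h2]
  | next θj ih =>
      intro hU hR x hx
      have ih' := ih (fun a b h => hU a b (Subf.next_ h))
        (fun a b h => hR a b (Subf.next_ h))
      simp only [leanSet, Set.mem_diff, Set.mem_setOf_eq, Set.mem_singleton_iff,
        LTLf.Sat]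
      constructor
      · rintro ⟨h1, h2⟩
        have hb : x + 1 < ρ.length := by omega
        exact ⟨hb, (ih' (x + 1) hb).1 h1⟩
      · rintro ⟨h1, h2⟩
        exact ⟨(ih' (x + 1) h1).2 h2, by omega⟩
  | wnext θj ih =>
      intro hU hR x hx
      have ih' := ih (fun a b h => hU a b (Subf.wnext_ h))
        (fun a b h => hR a b (Subf.wnext_ h))
      simp only [leanSet, Set.mem_union, Set.mem_setOf_eq, Set.mem_singleton_iff,
        LTLf.Sat]
      constructor
      · rintro (h | h)
        · by_cases hb : x + 1 < ρ.length
          · exact Or.inr ((ih' (x + 1) hb).1 h)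
          · exact Or.inl (by omega)
        · exact Or.inl (by omega)
      · rintro (h | h)
        · exact Or.inr (by omega)
        · by_cases hb : x + 1 < ρ.length
          · exact Or.inl ((ih' (x + 1) hb).2 h)
          · exact Or.inr (by omega)
  | until_ θj θk ihj ihk =>
      intro hU hR x hx
      have hj := ihj (fun a b h => hU a b (Subf.until_left h))
        (fun a b h => hR a b (Subf.until_left h))
      have hk := ihk (fun a b h => hU a b (Subf.until_right h))
        (fun a b h => hR a b (Subf.until_right h))
      exact until_Q_iff ρ Q θj θk (hU θj θk (Subf.refl _)) hj hk x hx
  | release θj θk ihj ihk =>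
      intro hU hR x hx
      have hj := ihj (fun a b h => hU a b (Subf.release_left h))
        (fun a b h => hR a b (Subf.release_left h))
      have hk := ihk (fun a b h => hU a b (Subf.release_right h))
        (fun a b h => hR a b (Subf.release_right h))
      exact release_Q_iff ρ Q θj θk (hR θj θk (Subf.refl _)) hj hk x hx

/-- Correctness of the Lean MSO encoding: `ρ ⊨ φ` iff there is an assignment
`Q` of sets to the `U`- and `R`-subformulas of `φ` with `0 ∈ lean(φ)` that
satisfies the lean fixpoint constraints on all positions of `ρ`. -/
theorem lean_mso_encoding_correct {P : Type} (φ : LTLf P) (ρ : List (Set P))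
    (hρ : ρ ≠ []) :
    LTLf.Sat ρ φ 0 ↔
      ∃ Q : LTLf P → Set ℕ,
        0 ∈ leanSet ρ Q φ ∧
        ∀ x : ℕ, x < ρ.length →
          (∀ θj θk : LTLf P, Subf (.until_ θj θk) φ →
            (x ∈ Q (.until_ θj θk) ↔
              (x ∈ leanSet ρ Q θk ∨
                (x + 1 < ρ.length ∧ x ∈ leanSet ρ Q θj ∧
                  x + 1 ∈ Q (.until_ θj θk))))) ∧
          (∀ θj θk : LTLf P, Subf (.release θj θk) φ →
            (x ∈ Q (.release θj θk) ↔
              (x ∈ leanSet ρ Q θk ∧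
                (x + 1 = ρ.length ∨ x ∈ leanSet ρ Q θj ∨
                  x + 1 ∈ Q (.release θj θk))))) := by
  have hlen : 0 < ρ.length := List.length_pos_iff.mpr hρ
  have hls := leanSet_Qsat ρ hρ
  constructor
  · intro hsat
    refine ⟨Qsat ρ, (hls φ 0).2 ⟨hlen, hsat⟩, fun x hx => ⟨?_, ?_⟩⟩
    · intro θj θk _
      rw [hls θk x, hls θj x]
      show (x < ρ.length ∧ LTLf.Sat ρ (.until_ θj θk) x) ↔ _
      rw [sat_until_unfold ρ θj θk x hx]
      show _ ↔ _ ∨ _ ∧ _ ∧ (x + 1 < ρ.length ∧ _)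
      constructor
      · rintro ⟨_, h | ⟨hb, hj, hq⟩⟩
        · exact Or.inl ⟨hx, h⟩
        · exact Or.inr ⟨hb, ⟨hx, hj⟩, hb, hq⟩
      · rintro (⟨_, h⟩ | ⟨hb, ⟨_, hj⟩, _, hq⟩)
        · exact ⟨hx, Or.inl h⟩
        · exact ⟨hx, Or.inr ⟨hb, hj, hq⟩⟩
    · intro θj θk _
      rw [hls θk x, hls θj x]
      show (x < ρ.length ∧ LTLf.Sat ρ (.release θj θk) x) ↔ _
      rw [sat_release_unfold ρ θj θk x hx]
      show _ ↔ _ ∧ (_ ∨ _ ∨ (x + 1 < ρ.length ∧ _))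
      constructor
      · rintro ⟨_, hk, hlen' | hj | hr⟩
        · exact ⟨⟨hx, hk⟩, Or.inl hlen'⟩
        · exact ⟨⟨hx, hk⟩, Or.inr (Or.inl ⟨hx, hj⟩)⟩
        · by_cases hb : x + 1 < ρ.length
          · exact ⟨⟨hx, hk⟩, Or.inr (Or.inr ⟨hb, hr⟩)⟩
          · exact ⟨⟨hx, hk⟩, Or.inl (by omega)⟩
      · rintro ⟨⟨_, hk⟩, hlen' | ⟨_, hj⟩ | ⟨_, hr⟩⟩
        · exact ⟨hx, hk, Or.inl hlen'⟩
        · exact ⟨hx, hk, Or.inr (Or.inl hj)⟩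
        · exact ⟨hx, hk, Or.inr (Or.inr hr)⟩
  · rintro ⟨Q, h0, hcon⟩
    have := lean_iff_sat ρ Q φ
      (fun θj θk hs x hx => (hcon x hx).1 θj θk hs)
      (fun θj θk hs x hx => (hcon x hx).2 θj θk hs) 0 hlen
    exact this.1 h0
end
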